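/- arXiv:2002.10571 — 2 statements merged into one kernel-verified Lean document; each statement's English description precedes it below -/
import Mathlib

section
/- Let P be a finite abelian p-group and H an abelian subgroup of Aut(P) whose order is coprime to p. If H acts indecomposably on P, then H is cyclic and C_P(h) is trivial for every h ∈ H with h ≠ 1 (i.e. every non-identity element of H has no non-trivial fixed points in P). -/
/-- A subgroup `H` of `Aut(P)` acts indecomposably on `P` if there is no internal direct
product decomposition `P = P₁ × P₂` with `P₁`, `P₂` both non-trivial and both invariant
under every element of `H`. -/
def ActsIndecomposably {P : Type*} [Group P] (S : Set (MulAut P)) : Prop :=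
  ¬ ∃ P₁ P₂ : Subgroup P, P₁ ≠ ⊥ ∧ P₂ ≠ ⊥ ∧ P₁ ⊓ P₂ = ⊥ ∧ P₁ ⊔ P₂ = ⊤ ∧
      (∀ f ∈ S, ∀ x ∈ P₁, f x ∈ P₁) ∧ (∀ f ∈ S, ∀ x ∈ P₂, f x ∈ P₂)

/-!
For `h ∈ H` of order coprime to `|P|`, Fitting's lemma splits `P = C_P(h) × [P, h]`, where
`[P, h]` is the image of `x ↦ x / h x`. Both factors are invariant under the abelian group `H`,
and `[P, h] ≠ 1` when `h ≠ 1`, so indecomposability forces `C_P(h) = 1`.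

A finite abelian group is cyclic once it has no subgroup `C_q × C_q`. If `⟨a, b⟩ ≅ C_q × C_q`
acted fixed-point-freely, then the norm `∏_{i<q} g^i x` of every `g ≠ 1` in it would vanish;
multiplying the norms of the elements `a b^j` (`j < q`) and regrouping by powers of `a` leaves
only `x^q`, so `x^q = 1` on `P`, contradicting `gcd(q, |P|) = 1`.
-/

open Finset Subgroup MonoidHom

section Cyclic

variable {G : Type*} [CommGroup G] [Fintype G] [DecidableEq G]

lemma card_pow_mul_eq_one_le (m n : ℕ) :
    #{a : G | a ^ (m * n) = 1} ≤ #{a : G | a ^ m = 1} * #{a : G | a ^ n = 1} := by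
  set S : Finset G := {a | a ^ (m * n) = 1}
  calc #S ≤ #{a : G | a ^ m = 1} * #(S.image (· ^ m)) := by
        refine card_le_mul_card_image _ _ fun b hb => ?_
        obtain ⟨c, -, rfl⟩ := mem_image.mp hb
        refine card_le_card_of_injOn (· * c⁻¹) (fun a ha => ?_)
          fun a₁ _ a₂ _ h => mul_right_cancel h
        simp only [coe_filter] at ha
        simp [mul_pow, ha.2]
    _ ≤ _ := by
        gcongr
        intro b hb
        obtain ⟨a, ha, rfl⟩ := mem_image.mp hb
        simpa [S, ← pow_mul] using ha

lemma card_pow_eq_one_le_of_prime (h : ∀ q, q.Prime → #{a : G | a ^ q = 1} ≤ q) {n : ℕ}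
    (hn : 0 < n) : #{a : G | a ^ n = 1} ≤ n := by
  induction n using Nat.recOnMul with
  | zero => omega
  | one => simp [filter_eq']
  | prime q hq => exact h q hq
  | mul m n ihm ihn =>
    calc _ ≤ #{a : G | a ^ m = 1} * #{a : G | a ^ n = 1} := card_pow_mul_eq_one_le m n
      _ ≤ m * n :=
        Nat.mul_le_mul (ihm (Nat.pos_of_mul_pos_right hn)) (ihn (Nat.pos_of_mul_pos_left hn))

end Cyclic

theorem isCyclic_of_pow_prime_eq_one_mem_zpowers {G : Type*} [CommGroup G] [Finite G]
    (h : ∀ q, q.Prime → ∀ a b : G, a ^ q = 1 → b ^ q = 1 → a ≠ 1 → b ∈ zpowers a) :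
    IsCyclic G := by
  classical
  have := Fintype.ofFinite G
  refine isCyclic_of_card_pow_eq_one_le fun n hn => card_pow_eq_one_le_of_prime (fun q hq => ?_) hn
  have : Fact q.Prime := ⟨hq⟩
  by_cases hex : ∃ a : G, a ^ q = 1 ∧ a ≠ 1
  · obtain ⟨a, haq, ha1⟩ := hex
    calc _ ≤ #((range (orderOf a)).image (a ^ ·)) := card_le_card fun b hb => by
            rw [← mem_zpowers_iff_mem_range_orderOf]
            exact h q hq a b haq (by simpa using hb) ha1
      _ ≤ q := card_image_le.trans (by simp [orderOf_eq_prime haq ha1])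
  · push Not at hex
    calc _ ≤ #({1} : Finset G) := card_le_card fun b hb => by simpa using hex b (by simpa using hb)
      _ ≤ q := by simpa using hq.one_lt.le

namespace MulAut

variable {P : Type*} [CommGroup P]

def commutatorHom (γ : MulAut P) : P →* P :=
  MonoidHom.mk' (commutatorMap γ) fun x y => by simp [mul_div_mul_comm]

@[simp] lemma commutatorHom_apply (γ : MulAut P) (x : P) : γ.commutatorHom x = x / γ x := rfl

lemma mem_ker_commutatorHom {γ : MulAut P} {x : P} : x ∈ γ.commutatorHom.ker ↔ γ x = x := by
  rw [mem_ker, commutatorHom_apply, div_eq_one, eq_comm]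

lemma map_commutatorHom {g γ : MulAut P} (h : Commute g γ) (x : P) :
    g (γ.commutatorHom x) = γ.commutatorHom (g x) := by
  rw [commutatorHom_apply, commutatorHom_apply, map_div, ← mul_apply, h.eq, mul_apply]

lemma commutatorHom_prod_range_pow_apply (γ : MulAut P) (x : P) (n : ℕ) :
    γ.commutatorHom (∏ i ∈ range n, (γ ^ i) x) = x / (γ ^ n) x := by
  simp only [map_prod, commutatorHom_apply, ← mul_apply, ← pow_succ']
  simpa using prod_range_div' (fun i => (γ ^ i) x) n

lemma prod_range_pow_apply_eq_one {γ : MulAut P} (hγ : FixedPointFree γ) {n : ℕ}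
    (hn : γ ^ n = 1) (x : P) : ∏ i ∈ range n, (γ ^ i) x = 1 :=
  hγ _ <| mem_ker_commutatorHom.mp <| by
    rw [mem_ker, commutatorHom_prod_range_pow_apply, hn, one_apply, div_self']

lemma isCompl_ker_range_commutatorHom [Finite P] {γ : MulAut P}
    (hγ : (Nat.card P).Coprime (orderOf γ)) :
    IsCompl γ.commutatorHom.ker γ.commutatorHom.range := by
  set c := γ.commutatorHom
  set n := orderOf γ
  have hker (y : P) : ∏ i ∈ range n, (γ ^ i) y ∈ c.ker := by
    rw [mem_ker, commutatorHom_prod_range_pow_apply, pow_orderOf_eq_one, one_apply, div_self']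
  constructor
  · rw [disjoint_def]
    rintro _ hx ⟨y, rfl⟩
    refine hγ.pow_left_bijective.injective ?_
    have hfix : γ ∈ MulAction.stabilizer (MulAut P) (c y) := mem_ker_commutatorHom.mp hx
    calc c y ^ n = ∏ i ∈ range n, (γ ^ i) (c y) := by
          rw [pow_eq_prod_const]
          exact prod_congr rfl fun i _ => (pow_mem hfix i).symm
      _ = c (∏ i ∈ range n, (γ ^ i) y) := by
          rw [map_prod]
          exact prod_congr rfl fun i _ => map_commutatorHom ((Commute.refl γ).pow_left i) y
      _ = 1 ^ n := by rw [mem_ker.mp (hker y), one_pow]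
  · rw [codisjoint_iff, eq_top_iff]
    intro _ _
    obtain ⟨y, rfl⟩ := hγ.pow_left_bijective.surjective ‹P›
    have hrange : y ^ n / ∏ i ∈ range n, (γ ^ i) y ∈ c.range := by
      rw [pow_eq_prod_const, ← prod_div_distrib]
      exact prod_mem fun i _ => ⟨_, commutatorHom_prod_range_pow_apply γ y i⟩
    simpa using mul_mem_sup (hker y) hrange

lemma _root_.ActsIndecomposably.fixedPointFree [Finite P] {H : Subgroup (MulAut P)}
    (hind : ActsIndecomposably (H : Set (MulAut P)))
    (hab : ∀ a ∈ H, ∀ b ∈ H, a * b = b * a) (hcop : (Nat.card P).Coprime (Nat.card H))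
    {γ : MulAut P} (hγ : γ ∈ H) (hγ1 : γ ≠ 1) : FixedPointFree γ := by
  set c := γ.commutatorHom
  have hc := isCompl_ker_range_commutatorHom (hcop.coprime_dvd_right (H.orderOf_dvd_natCard hγ))
  have hrange : c.range ≠ ⊥ := by
    rw [Ne, range_eq_bot_iff]
    exact fun h => hγ1 (MulEquiv.ext fun x => (div_eq_one.mp (DFunLike.congr_fun h x)).symm)
  have hker : c.ker = ⊥ := by
    by_contra hne
    refine hind ⟨_, _, hne, hrange, hc.inf_eq_bot, hc.sup_eq_top, fun g hg x hx => ?_,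
      fun g hg x ⟨y, hy⟩ => ⟨g y, ?_⟩⟩
    · rw [mem_ker, ← map_commutatorHom (hab g hg γ hγ), mem_ker.mp hx, map_one]
    · rw [← map_commutatorHom (hab g hg γ hγ), hy]
  intro x hx
  exact (mem_bot.mp (hker ▸ mem_ker_commutatorHom.mpr hx))

lemma pow_eq_one_of_notMem_zpowers {G : Type*} [CommGroup G] (ρ : G →* MulAut P)
    (hfree : ∀ g, g ≠ 1 → FixedPointFree (ρ g)) {q : ℕ} (hq : q.Prime) {a b : G}
    (ha : a ^ q = 1) (hb : b ^ q = 1) (ha1 : a ≠ 1) (hba : b ∉ zpowers a) (x : P) :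
    x ^ q = 1 := by
  have : Fact q.Prime := ⟨hq⟩
  have hbq : orderOf b = q := orderOf_eq_prime hb fun h => hba (h ▸ one_mem _)
  have hbi : ∀ i ∈ range q, i ≠ 0 → b ^ i ≠ 1 := fun i hi hi0 =>
    pow_ne_one_of_lt_orderOf hi0 (hbq ▸ mem_range.mp hi)
  have habj : ∀ j ∈ range q, a * b ^ j ≠ 1 := by
    intro j hj h
    obtain rfl | hj0 := eq_or_ne j 0
    · exact ha1 (by simpa using h)
    have hcop : j.Coprime (orderOf b) :=
      hbq ▸ (Nat.coprime_comm.mp ((hq.coprime_iff_not_dvd).mpr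
        (Nat.not_dvd_of_pos_of_lt (Nat.pos_of_ne_zero hj0) (mem_range.mp hj))))
    refine hba (zpowers_le.mpr ?_ (mem_zpowers_pow_iff.mpr hcop))
    rw [eq_inv_of_mul_eq_one_right h]
    exact inv_mem (mem_zpowers a)
  have hnorm : ∀ g : G, g ≠ 1 → g ^ q = 1 → ∏ i ∈ range q, ρ (g ^ i) x = 1 := fun g hg hgq => by
    simpa only [map_pow] using
      prod_range_pow_apply_eq_one (hfree g hg) (by rw [← map_pow, hgq, map_one]) x
  calc x ^ q = ∏ i ∈ range q, ρ (a ^ i) (∏ j ∈ range q, ρ ((b ^ i) ^ j) x) := by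
        rw [prod_eq_single_of_mem 0 (mem_range.mpr hq.pos)]
        · simp
        · intro i hi hi0
          rw [hnorm _ (hbi i hi hi0) (by rw [← pow_mul, mul_comm, pow_mul, hb, one_pow]), map_one]
    _ = ∏ j ∈ range q, ∏ i ∈ range q, ρ ((a * b ^ j) ^ i) x := by
        rw [prod_comm]
        simp only [map_prod, ← mul_apply, ← map_mul, mul_pow, pow_right_comm]
    _ = 1 := prod_eq_one fun j hj => hnorm _ (habj j hj) (by
        rw [mul_pow, ← pow_mul, mul_comm j, pow_mul, ha, hb, one_pow, one_mul])

theorem isCyclic_of_fixedPointFree [Finite P] {G : Type*} [CommGroup G] [Finite G]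
    (ρ : G →* MulAut P) (hρ : Function.Injective ρ) (hfree : ∀ g, g ≠ 1 → FixedPointFree (ρ g))
    (hcop : (Nat.card P).Coprime (Nat.card G)) : IsCyclic G := by
  refine isCyclic_of_pow_prime_eq_one_mem_zpowers fun q hq a b ha hb ha1 => ?_
  by_contra hba
  have : Fact q.Prime := ⟨hq⟩
  have hqP : (Nat.card P).Coprime q :=
    hcop.coprime_dvd_right (orderOf_eq_prime ha ha1 ▸ orderOf_dvd_natCard a)
  have : Subsingleton P := ⟨fun x y => hqP.pow_left_bijective.injective (by
    rw [pow_eq_one_of_notMem_zpowers ρ hfree hq ha hb ha1 hba,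
      pow_eq_one_of_notMem_zpowers ρ hfree hq ha hb ha1 hba])⟩
  exact ha1 (hρ (MulEquiv.ext fun x => Subsingleton.elim _ _))

end MulAut

/-- Let `P` be a finite abelian `p`-group and `H` an abelian subgroup of `Aut(P)` whose
order is coprime to `p`.  If `H` acts indecomposably on `P`, then `H` is cyclic and
`C_P(h)` is trivial for every `h ∈ H` with `h ≠ 1`, i.e. every non-identity element of `H`
has no non-trivial fixed points in `P`. -/
theorem stmt8 (p : ℕ) (hp : p.Prime) (P : Type) [CommGroup P] [Finite P]
    (hP : IsPGroup p P) (H : Subgroup (MulAut P))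
    (hab : ∀ a ∈ H, ∀ b ∈ H, a * b = b * a)
    (hcop : Nat.Coprime (Nat.card H) p)
    (hind : ActsIndecomposably (H : Set (MulAut P))) :
    IsCyclic H ∧ ∀ h ∈ H, h ≠ 1 → ∀ x : P, h x = x → x = 1 := by
  have : Fact p.Prime := ⟨hp⟩
  obtain ⟨k, hk⟩ := IsPGroup.iff_card.mp hP
  have hcopP : (Nat.card P).Coprime (Nat.card H) := hk ▸ (hcop.symm.pow_left k)
  have hfree : ∀ h ∈ H, h ≠ 1 → FixedPointFree h := fun h hh hh1 =>
    hind.fixedPointFree hab hcopP hh hh1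
  let _ : CommGroup H := { mul_comm := fun a b => Subtype.ext (hab a a.2 b b.2) }
  exact ⟨MulAut.isCyclic_of_fixedPointFree H.subtype H.subtype_injective
    (fun g hg => hfree g g.2 (by simpa using hg)) hcopP, hfree⟩
end

section
/- Let P be a finite abelian p-group and H an abelian subgroup of Aut(P) whose order is coprime to p, acting indecomposably on P. If h ∈ H and C_P(h) is non-trivial, then h = 1. -/
/-- Let `P` be a finite abelian `p`-group and `H` an abelian subgroup of `Aut(P)` whose
order is coprime to `p`, acting indecomposably on `P`.  If `h ∈ H` and
`C_P(h) = {x ∈ P : h(x) = x}` is non-trivial, then `h = 1`. -/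
theorem stmt13 (p : ℕ) (hp : p.Prime) (P : Type) [CommGroup P] [Finite P]
    (hP : IsPGroup p P) (H : Subgroup (MulAut P))
    (hab : ∀ a ∈ H, ∀ b ∈ H, a * b = b * a)
    (hcop : Nat.Coprime (Nat.card H) p)
    (hind : ActsIndecomposably (H : Set (MulAut P)))
    (h : MulAut P) (hh : h ∈ H) (hfix : ∃ x : P, x ≠ 1 ∧ h x = x) :
    h = 1 := by
  obtain ⟨x0, hx0ne, hx0⟩ := hfix
  haveI : Fact p.Prime := ⟨hp⟩
  set n := orderOf h with hn
  obtain ⟨k, hk⟩ := IsPGroup.iff_card.mp hP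
  have hnH : n ∣ Nat.card H := by
    have := orderOf_dvd_natCard (⟨h, hh⟩ : H)
    rwa [Subgroup.orderOf_mk] at this
  have hnp : Nat.Coprime n (Nat.card P) := by
    rw [hk]
    exact (hcop.coprime_dvd_left hnH).pow_right k
  -- the norm map
  let N : P →* P :=
    { toFun := fun x => ∏ i ∈ Finset.range n, (h ^ i) x
      map_one' := by simp
      map_mul' := fun a b => by
        simp [map_mul, Finset.prod_mul_distrib] }
  have hhn : h ^ n = 1 := pow_orderOf_eq_one h
  have hshift : ∀ x : P, (∏ i ∈ Finset.range n, (h ^ (i + 1)) x) =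
      ∏ i ∈ Finset.range n, (h ^ i) x := by
    intro x
    have h1 := Finset.prod_range_succ' (fun i => (h ^ i) x) n
    have h2 := Finset.prod_range_succ (fun i => (h ^ i) x) n
    have h0 : (h ^ n) x = (h ^ 0) x := by rw [hhn]; rfl
    exact mul_right_cancel ((h1.symm.trans h2).trans (by rw [h0]))
  have hNfixed : ∀ x : P, h (N x) = N x := by
    intro x
    show h (∏ i ∈ Finset.range n, (h ^ i) x) = ∏ i ∈ Finset.range n, (h ^ i) x
    rw [map_prod]
    have : ∀ i, h ((h ^ i) x) = (h ^ (i + 1)) x := by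
      intro i; rw [pow_succ']; rfl
    simp_rw [this]
    exact hshift x
  have hNh : ∀ x : P, N (h x) = N x := by
    intro x
    show (∏ i ∈ Finset.range n, (h ^ i) (h x)) = ∏ i ∈ Finset.range n, (h ^ i) x
    have : ∀ i : ℕ, (h ^ i) (h x) = (h ^ (i + 1)) x := by
      intro i; rw [pow_succ]; rfl
    simp_rw [this]
    exact hshift x
  have hNfix : ∀ x : P, h x = x → N x = x ^ n := by
    intro x hx
    have hi : ∀ i : ℕ, (h ^ i) x = x := by
      intro i
      induction i with
      | zero => rfl
      | succ m ih => rw [pow_succ']; show h ((h ^ m) x) = x; rw [ih, hx]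
    show (∏ i ∈ Finset.range n, (h ^ i) x) = x ^ n
    simp [hi]
  -- the subgroups
  let C : Subgroup P :=
    { carrier := {x | h x = x}
      one_mem' := map_one h
      mul_mem' := fun {a b} ha hb => by
        simp only [Set.mem_setOf_eq] at *
        rw [map_mul, ha, hb]
      inv_mem' := fun {a} ha => by
        simp only [Set.mem_setOf_eq] at *
        rw [map_inv, ha] }
  let d : P →* P :=
    { toFun := fun x => h x * x⁻¹
      map_one' := by simp
      map_mul' := fun a b => by
        simp only [map_mul, mul_inv_rev]
        ac_rfl }
  let D : Subgroup P := d.range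
  have hmemC : ∀ x : P, x ∈ C ↔ h x = x := fun x => Iff.rfl
  -- C ⊓ D = ⊥
  have hinf : C ⊓ D = ⊥ := by
    rw [Subgroup.eq_bot_iff_forall]
    rintro y ⟨hyC, x, rfl⟩
    have h1 : N (h x * x⁻¹) = 1 := by
      rw [map_mul, map_inv, hNh, mul_inv_cancel]
    have h2 : N (h x * x⁻¹) = (h x * x⁻¹) ^ n := hNfix _ hyC
    have h3 : (h x * x⁻¹ : P) ^ n = 1 := by rw [← h2, h1]
    have h4 : orderOf (h x * x⁻¹ : P) ∣ n := orderOf_dvd_of_pow_eq_one h3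
    have h5 : orderOf (h x * x⁻¹ : P) ∣ Nat.card P := orderOf_dvd_natCard _
    have : orderOf (h x * x⁻¹ : P) = 1 :=
      Nat.eq_one_of_dvd_coprimes hnp h4 h5
    exact orderOf_eq_one_iff.mp this
  -- C ⊔ D = ⊤
  have hsup : C ⊔ D = ⊤ := by
    rw [Subgroup.eq_top_iff']
    intro x
    obtain ⟨z, rfl⟩ : ∃ z : P, z ^ n = x := (powCoprime hnp.symm).surjective x
    have hzD : ∀ i : ℕ, ((h ^ i) z * z⁻¹ : P) ∈ D := by
      intro i
      induction i with
      | zero => simpa using D.one_mem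
      | succ m ih =>
        have : ((h ^ (m+1)) z * z⁻¹ : P) =
            (h ((h ^ m) z) * ((h ^ m) z)⁻¹) * ((h ^ m) z * z⁻¹) := by
          rw [pow_succ']
          show (h ((h ^ m) z) * z⁻¹ : P) = _
          group
        rw [this]
        exact mul_mem ⟨(h ^ m) z, rfl⟩ ih
    have hw : (∏ i ∈ Finset.range n, ((h ^ i) z * z⁻¹ : P)) ∈ D :=
      Subgroup.prod_mem D fun i _ => hzD i
    have key : (z : P) ^ n = N z * (∏ i ∈ Finset.range n, ((h ^ i) z * z⁻¹ : P))⁻¹ := by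
      show (z : P) ^ n = (∏ i ∈ Finset.range n, (h ^ i) z) * _
      rw [Finset.prod_mul_distrib, Finset.prod_const, Finset.card_range,
        mul_inv_rev, inv_pow, inv_inv, mul_comm (z ^ n), mul_inv_cancel_left]
    rw [key]
    exact mul_mem (Subgroup.mem_sup_left (hNfixed z)) (Subgroup.mem_sup_right (inv_mem hw))
  -- invariance
  have hCinv : ∀ f ∈ (H : Set (MulAut P)), ∀ x ∈ C, f x ∈ C := by
    intro f hf x hx
    have hc : h * f = f * h := hab h hh f hf
    show h (f x) = f x
    calc h (f x) = (h * f) x := rfl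
      _ = (f * h) x := by rw [hc]
      _ = f (h x) := rfl
      _ = f x := by rw [hx]
  have hDinv : ∀ f ∈ (H : Set (MulAut P)), ∀ x ∈ D, f x ∈ D := by
    rintro f hf x ⟨y, rfl⟩
    have hc : h * f = f * h := hab h hh f hf
    refine ⟨f y, ?_⟩
    show h (f y) * (f y)⁻¹ = f (h y * y⁻¹)
    rw [map_mul, map_inv]
    congr 1
    calc h (f y) = (h * f) y := rfl
      _ = (f * h) y := by rw [hc]
      _ = f (h y) := rfl
  -- C ≠ ⊥
  have hCne : C ≠ ⊥ := by
    intro hC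
    exact hx0ne (Subgroup.eq_bot_iff_forall C |>.mp hC x0 hx0)
  -- D = ⊥
  have hD : D = ⊥ := by
    by_contra hD
    exact hind ⟨C, D, hCne, hD, hinf, hsup, hCinv, hDinv⟩
  -- conclude
  ext x
  have : (h x * x⁻¹ : P) = 1 :=
    Subgroup.eq_bot_iff_forall D |>.mp hD _ ⟨x, rfl⟩
  have := mul_inv_eq_one.mp this
  simpa using this
end
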